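/- (Section 5.1) Let J be an invertible skew-symmetric real n×n matrix, M a symmetric real n×n matrix, and V : ℝ^n → ℝ a twice continuously differentiable function. Set K = J^{−1}·M and g(y) = J^{−1}·∇V(y). Suppose (A,b) is symplectic with b_i ≠ 0 for all i. Then at every point y ∈ ℝ^n where I_{sn} − h·Ā·F(y) is invertible, the special symplectic exponential integrator for y' = K·y + g(y) satisfies det(Dφ_h(y)) = 1; in particular, all special symplectic exponential integrators preserve volume for the system y' = J^{−1}·M·y + J^{−1}·∇V(y). -/

import Mathlib

open Matrix

/-- The Jacobian matrix of a map `f : ℝ^ι → ℝ^ι` at a point `y`. -/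
noncomputable def jac {ι : Type*} [Fintype ι] [DecidableEq ι]
    (f : (ι → ℝ) → (ι → ℝ)) (y : ι → ℝ) : Matrix ι ι ℝ :=
  LinearMap.toMatrix' ((fderiv ℝ f y).toLinearMap)

/-- The gradient of a scalar function on `ℝ^n`, in coordinates. -/
noncomputable def grad {n : ℕ} (V : (Fin n → ℝ) → ℝ) (y : Fin n → ℝ) : Fin n → ℝ :=
  fun i => fderiv ℝ V y (Pi.single i 1)

/-- A Runge–Kutta pair `(A, b)` is symplectic. -/
def IsSymplecticRK {s : ℕ} (A : Matrix (Fin s) (Fin s) ℝ) (b : Fin s → ℝ) : Prop :=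
  ∀ i j, b i * A i j + b j * A j i - b i * b j = 0

/-!
Differentiating the stage and update equations gives `Dφ_h(y) = exp(hK) (I + ∑ bᵢ Uᵢ)` with
`Uᵢ = h exp(-cᵢhK) Dg(kᵢ) Dkᵢ`, and the `Uᵢ` solve the stage equations
`Uᵢ = Hᵢ + ∑ⱼ aᵢⱼ Hᵢ Uⱼ` of the Runge–Kutta method for a linear system, with
`Hᵢ = h exp(-cᵢhK) Dg(kᵢ) exp(cᵢhK)`. Since `K = J⁻¹M` and `Dg = J⁻¹∇²V` are Hamiltonian
(`XᵀJ = -JX`), `exp(tK)` preserves `J`, so it has determinant `1` and the `Hᵢ` are Hamiltonian.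

In block form, with `𝒢 = diag(Hᵢ)` and `𝒜 = A ⊗ I`, the stage equations say
`(I - 𝒢𝒜)(I + (bⱼUᵢ)ᵢⱼ) = I - 𝒢(𝒜 - 𝟙bᵀ ⊗ I)`. Symplecticity of `(A, b)` is
`diag(b)(A - 𝟙bᵀ) = -Aᵀdiag(b)`, so the right-hand side is similar to `I + 𝒢𝒜ᵀ`, whose
blockwise transpose is conjugate by `diag(J)` to `I - 𝒜𝒢`. By Sylvester's identity all of
`I - 𝒜𝒢`, `I - 𝒢𝒜` and the right-hand side have the same (nonzero) determinant, hence
`det(I + ∑ bᵢUᵢ) = det(I + (bⱼUᵢ)ᵢⱼ) = 1`.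
-/

section Jacobian

variable {ι : Type*} [Fintype ι] [DecidableEq ι]

theorem HasFDerivAt.jac_eq {f : (ι → ℝ) → ι → ℝ} {f' : (ι → ℝ) →L[ℝ] ι → ℝ} {y : ι → ℝ}
    (hf : HasFDerivAt f f' y) : jac f y = LinearMap.toMatrix' f' := by
  rw [jac, hf.fderiv]

theorem jac_apply (f : (ι → ℝ) → ι → ℝ) (y : ι → ℝ) (i j : ι) :
    jac f y i j = fderiv ℝ f y (Pi.single j 1) i := by
  rw [jac, LinearMap.toMatrix'_apply]
  congr 2

theorem hasFDerivAt_mulVec (P : Matrix ι ι ℝ) (y : ι → ℝ) :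
    HasFDerivAt (fun z => P *ᵥ z) (LinearMap.toContinuousLinearMap (toLin' P)) y :=
  (LinearMap.toContinuousLinearMap (toLin' P)).hasFDerivAt

theorem jac_mulVec_comp (P : Matrix ι ι ℝ) {f : (ι → ℝ) → ι → ℝ} {y : ι → ℝ}
    (hf : DifferentiableAt ℝ f y) : jac (fun z => P *ᵥ f z) y = P * jac f y := by
  have hPf := (hasFDerivAt_mulVec P _).comp y hf.hasFDerivAt
  rw [Function.comp_def] at hPf
  rw [hPf.jac_eq]
  simp [LinearMap.toMatrix'_comp, jac]

theorem jac_mulVec_add_smul_sum {κ : Type*} [Fintype κ] (P : Matrix ι ι ℝ) (h : ℝ)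
    (Q : κ → Matrix ι ι ℝ) {g : (ι → ℝ) → ι → ℝ} {k : κ → (ι → ℝ) → ι → ℝ} {y : ι → ℝ}
    (hg : ∀ j, DifferentiableAt ℝ g (k j y)) (hk : ∀ j, DifferentiableAt ℝ (k j) y) :
    jac (fun z => P *ᵥ z + h • ∑ j, Q j *ᵥ g (k j z)) y
      = P + h • ∑ j, Q j * (jac g (k j y) * jac (k j) y) := by
  have hterm : ∀ j, HasFDerivAt (fun z => Q j *ᵥ g (k j z))
      ((LinearMap.toContinuousLinearMap (toLin' (Q j))).comp
        ((fderiv ℝ g (k j y)).comp (fderiv ℝ (k j) y))) y := fun j =>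
    (hasFDerivAt_mulVec (Q j) _).comp y ((hg j).hasFDerivAt.comp y (hk j).hasFDerivAt)
  rw [((hasFDerivAt_mulVec P y).fun_add
    ((HasFDerivAt.fun_sum fun j _ => hterm j).fun_const_smul h)).jac_eq]
  simp [LinearMap.toMatrix'_comp, jac]

end Jacobian

section Hessian

variable {n : ℕ} {V : (Fin n → ℝ) → ℝ}

theorem grad_eq_comp_fderiv :
    grad V = ⇑(ContinuousLinearMap.pi fun i => ContinuousLinearMap.apply ℝ ℝ (Pi.single i 1))
      ∘ fderiv ℝ V := rfl

theorem differentiable_grad (hV : ContDiff ℝ 2 V) : Differentiable ℝ (grad V) := by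
  rw [grad_eq_comp_fderiv]
  exact (ContinuousLinearMap.differentiable _).comp
    ((hV.fderiv_right (m := 1) (by norm_num)).differentiable one_ne_zero)

theorem jac_grad_transpose (hV : ContDiff ℝ 2 V) (y : Fin n → ℝ) :
    (jac (grad V) y)ᵀ = jac (grad V) y := by
  have hd : HasFDerivAt (fderiv ℝ V) (fderiv ℝ (fderiv ℝ V) y) y :=
    ((hV.fderiv_right (m := 1) (by norm_num)).differentiable one_ne_zero y).hasFDerivAt
  have hsymm : IsSymmSndFDerivAt ℝ V y := hV.contDiffAt.isSymmSndFDerivAt (by simp)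
  ext i j
  rw [transpose_apply, jac_apply, jac_apply, grad_eq_comp_fderiv,
    ((ContinuousLinearMap.hasFDerivAt _).comp y hd).fderiv]
  exact hsymm _ _

end Hessian

section Hamiltonian

variable {m : Type*} [Fintype m] [DecidableEq m] {J : Matrix m m ℝ}

theorem transpose_inv_mul_mul_eq_neg (hJ : IsUnit J) (hJskew : Jᵀ = -J) {H : Matrix m m ℝ}
    (hH : Hᵀ = H) : (J⁻¹ * H)ᵀ * J = -(J * (J⁻¹ * H)) := by
  have hJdet := (isUnit_iff_isUnit_det J).1 hJ
  have hinvJ : (J⁻¹)ᵀ * J = -1 :=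
    calc (J⁻¹)ᵀ * J = -((J * J⁻¹)ᵀ) := by rw [transpose_mul, hJskew, mul_neg, neg_neg]
      _ = -1 := by rw [mul_nonsing_inv J hJdet, transpose_one]
  rw [transpose_mul, hH, Matrix.mul_assoc, hinvJ, mul_nonsing_inv_cancel_left J H hJdet, mul_neg,
    mul_one]

theorem exp_smul_add (X : Matrix m m ℝ) (a b : ℝ) :
    NormedSpace.exp ((a + b) • X) = NormedSpace.exp (a • X) * NormedSpace.exp (b • X) := by
  rw [add_smul, exp_add_of_commute]
  exact ((Commute.refl X).smul_left a).smul_right b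

theorem exp_neg_smul_mul_exp_smul (X : Matrix m m ℝ) (t : ℝ) :
    NormedSpace.exp ((-t) • X) * NormedSpace.exp (t • X) = 1 := by
  rw [← exp_smul_add, neg_add_cancel, zero_smul, NormedSpace.exp_zero]

theorem exp_smul_transpose_mul_mul (hJ : IsUnit J) {X : Matrix m m ℝ}
    (hX : Xᵀ * J = -(J * X)) (t : ℝ) :
    (NormedSpace.exp (t • X))ᵀ * J * NormedSpace.exp (t • X) = J := by
  have hJdet := (isUnit_iff_isUnit_det J).1 hJ
  have hXt : (t • X)ᵀ = J * ((-t) • X) * J⁻¹ := by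
    have : Xᵀ = -(J * X * J⁻¹) := by
      rw [← neg_mul, ← hX, mul_nonsing_inv_cancel_right _ _ hJdet]
    rw [transpose_smul, this, neg_smul, mul_neg, neg_mul, smul_neg, Matrix.mul_smul,
      Matrix.smul_mul]
  rw [← exp_transpose, hXt, exp_conj _ _ hJ]
  simp only [Matrix.mul_assoc, nonsing_inv_mul_cancel_left _ _ hJdet]
  rw [exp_neg_smul_mul_exp_smul, mul_one]

theorem det_exp_smul_eq_one (hJ : IsUnit J) {X : Matrix m m ℝ} (hX : Xᵀ * J = -(J * X))
    (t : ℝ) : (NormedSpace.exp (t • X)).det = 1 := by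
  -- The determinant is `±1` because `exp (u • X)` preserves `J`, and it is a square.
  have hsq : ∀ u : ℝ, (NormedSpace.exp (u • X)).det ^ 2 = 1 := fun u => by
    have := congrArg det (exp_smul_transpose_mul_mul hJ hX u)
    rw [det_mul, det_mul, det_transpose, mul_comm, ← mul_assoc, ← sq] at this
    exact (mul_eq_right₀ ((isUnit_iff_isUnit_det J).1 hJ).ne_zero).1 this
  have hhalf : t = t / 2 + t / 2 := by ring
  rw [hhalf, exp_smul_add, det_mul, ← sq, hsq]

theorem transpose_conj_mul_eq_neg {S T X : Matrix m m ℝ} (hS : Sᵀ * J * S = J) (hTS : T * S = 1)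
    (hX : Xᵀ * J = -(J * X)) : (T * X * S)ᵀ * J = -(J * (T * X * S)) := by
  have hST : S * T = 1 := mul_eq_one_comm.1 hTS
  have hT : Tᵀ * J = J * S :=
    calc Tᵀ * J = Tᵀ * (Sᵀ * J * S) := by rw [hS]
      _ = (S * T)ᵀ * J * S := by rw [transpose_mul]; simp only [Matrix.mul_assoc]
      _ = J * S := by rw [hST, transpose_one, one_mul]
  have hS' : Sᵀ * J = J * T :=
    calc Sᵀ * J = Sᵀ * J * (S * T) := by rw [hST, mul_one]
      _ = J * T := by rw [← Matrix.mul_assoc, hS]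
  rw [transpose_mul, transpose_mul, Matrix.mul_assoc, Matrix.mul_assoc, hT,
    ← Matrix.mul_assoc Xᵀ, hX, neg_mul, mul_neg]
  simp only [← Matrix.mul_assoc, hS']

end Hamiltonian

section BlockMatrix

variable {ι m : Type*} [Fintype ι] [DecidableEq ι] [Fintype m] [DecidableEq m]

noncomputable def blockDet : Matrix ι ι (Matrix m m ℝ) →* ℝ :=
  detMonoidHom.comp (compAlgEquiv ι m ℝ ℝ).toRingEquiv.toMonoidHom

theorem blockDet_apply (X : Matrix ι ι (Matrix m m ℝ)) :
    blockDet X = (compAlgEquiv ι m ℝ ℝ X).det := rfl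

theorem blockDet_diagonal (d : ι → Matrix m m ℝ) : blockDet (diagonal d) = ∏ i, (d i).det := by
  rw [blockDet_apply, ← det_blockDiagonal, ← det_submatrix_equiv_self (Equiv.prodComm ι m)]
  congr 1
  ext ⟨i, a⟩ ⟨j, b⟩
  by_cases hij : i = j <;> simp [blockDiagonal_apply, hij]

theorem blockDet_one_add_mul_comm (X Y : Matrix ι ι (Matrix m m ℝ)) :
    blockDet (1 + X * Y) = blockDet (1 + Y * X) := by
  simpa only [blockDet_apply, map_add, map_one, map_mul]
    using det_one_add_mul_comm (compAlgEquiv ι m ℝ ℝ X) (compAlgEquiv ι m ℝ ℝ Y)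

theorem blockDet_transpose_map (X : Matrix ι ι (Matrix m m ℝ)) :
    blockDet (Xᵀ.map transpose) = blockDet X := by
  rw [blockDet_apply, blockDet_apply, compAlgEquiv_apply, ← transpose_comp, det_transpose,
    compAlgEquiv_apply]

theorem blockDet_eq_of_mul_eq_mul {P X Y : Matrix ι ι (Matrix m m ℝ)} (hP : blockDet P ≠ 0)
    (h : P * X = Y * P) : blockDet X = blockDet Y := by
  have := congrArg blockDet h
  rw [map_mul, map_mul, mul_comm (blockDet Y)] at this
  exact mul_left_cancel₀ hP this

theorem det_one_add_sum_smul_eq_blockDet (b : ι → ℝ) (U : ι → Matrix m m ℝ) :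
    (1 + ∑ i, b i • U i).det = blockDet (1 + of fun i j => b j • U i) := by
  let P : Matrix (ι × m) m ℝ := of fun p q => U p.1 p.2 q
  let Q : Matrix m (ι × m) ℝ := of fun p q => b q.1 * (1 : Matrix m m ℝ) p q.2
  have hQP : Q * P = ∑ i, b i • U i := by
    ext p q
    simp [P, Q, mul_apply, Fintype.sum_prod_type, Matrix.sum_apply, one_apply]
  have hPQ : P * Q = compAlgEquiv ι m ℝ ℝ (of fun i j => b j • U i) := by
    ext p q
    simp [P, Q, mul_apply, one_apply, mul_comm]
  rw [← hQP, det_one_add_mul_comm, hPQ, blockDet_apply, map_add, map_one]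

theorem blockDet_one_sub_mul_comm (X Y : Matrix ι ι (Matrix m m ℝ)) :
    blockDet (1 - X * Y) = blockDet (1 - Y * X) := by
  rw [sub_eq_add_neg, ← neg_mul, blockDet_one_add_mul_comm, mul_neg, ← sub_eq_add_neg]

theorem blockDet_map_diagonal_ne_zero {d : ι → ℝ} (hd : ∀ i, d i ≠ 0) :
    blockDet ((diagonal d).map (algebraMap ℝ (Matrix m m ℝ))) ≠ 0 := by
  rw [diagonal_map (map_zero _), blockDet_diagonal]
  exact Finset.prod_ne_zero_iff.2 fun i _ => by simp [algebraMap_eq_diagonal, hd i]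

theorem blockDet_scalar_ne_zero {J : Matrix m m ℝ} (hJ : IsUnit J) :
    blockDet (scalar ι J) ≠ 0 := by
  rw [scalar_apply, blockDet_diagonal]
  exact Finset.prod_ne_zero_iff.2 fun _ _ => ((isUnit_iff_isUnit_det J).1 hJ).ne_zero

theorem diagonal_mul_map_algebraMap (G : ι → Matrix m m ℝ) (B : Matrix ι ι ℝ) :
    diagonal G * B.map (algebraMap ℝ (Matrix m m ℝ)) = of fun i j => B i j • G i := by
  ext1 i j
  rw [diagonal_mul, map_apply, ← Algebra.commutes, ← Algebra.smul_def, of_apply]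

theorem map_algebraMap_mul_diagonal (B : Matrix ι ι ℝ) (G : ι → Matrix m m ℝ) :
    B.map (algebraMap ℝ (Matrix m m ℝ)) * diagonal G = of fun i j => B i j • G j := by
  ext1 i j
  rw [mul_diagonal, map_apply, ← Algebra.smul_def, of_apply]

theorem one_sub_diagonal_mul_map_mul_one_add {G U : ι → Matrix m m ℝ} {B : Matrix ι ι ℝ}
    (hU : ∀ i, U i = G i + ∑ j, B i j • (G i * U j)) (b : ι → ℝ) :
    (1 - diagonal G * B.map (algebraMap ℝ (Matrix m m ℝ))) * (1 + of fun i j => b j • U i)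
      = 1 - diagonal G * (B - vecMulVec 1 b).map (algebraMap ℝ (Matrix m m ℝ)) := by
  have hW : (1 - diagonal G * B.map (algebraMap ℝ (Matrix m m ℝ))) * (of fun i j => b j • U i)
      = diagonal G * (vecMulVec 1 b).map (algebraMap ℝ (Matrix m m ℝ)) := by
    ext1 i j
    rw [sub_mul, one_mul, diagonal_mul_map_algebraMap, diagonal_mul_map_algebraMap,
      Matrix.sub_apply, mul_apply]
    simp only [of_apply, vecMulVec_apply, Pi.one_apply, one_mul]
    nth_rewrite 1 [hU i]
    simp only [Matrix.smul_mul, Matrix.mul_smul, smul_smul, Finset.smul_sum, smul_add,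
      mul_comm (b j)]
    exact add_sub_cancel_right _ _
  rw [mul_add, mul_one, hW, Matrix.map_sub _ (map_sub _), mul_sub]
  abel

theorem blockDet_one_add_diagonal_mul_map_transpose {J : Matrix m m ℝ} (hJ : IsUnit J)
    {G : ι → Matrix m m ℝ} (hG : ∀ i, (G i)ᵀ * J = -(J * G i)) (B : Matrix ι ι ℝ) :
    blockDet (1 + diagonal G * Bᵀ.map (algebraMap ℝ (Matrix m m ℝ)))
      = blockDet (1 - B.map (algebraMap ℝ (Matrix m m ℝ)) * diagonal G) := by
  rw [← blockDet_transpose_map]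
  refine (blockDet_eq_of_mul_eq_mul (blockDet_scalar_ne_zero hJ) ?_).symm
  ext1 i j
  rw [scalar_apply, diagonal_mul, mul_diagonal, map_apply, transpose_apply, Matrix.add_apply,
    diagonal_mul_map_algebraMap, map_algebraMap_mul_diagonal, Matrix.sub_apply, of_apply,
    of_apply, transpose_apply, transpose_add, add_mul, mul_sub, transpose_smul, Matrix.smul_mul,
    hG, Matrix.mul_smul, smul_neg, ← sub_eq_add_neg]
  congr 1
  rcases eq_or_ne i j with rfl | hij
  · simp
  · simp [one_apply_ne hij, one_apply_ne hij.symm]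

end BlockMatrix

section SymplecticRK

variable {s : ℕ} {A : Matrix (Fin s) (Fin s) ℝ} {b : Fin s → ℝ} {m : Type*} [Fintype m]
  [DecidableEq m]

theorem IsSymplecticRK.diagonal_mul_sub_vecMulVec (hsymp : IsSymplecticRK A b) :
    diagonal b * (A - vecMulVec 1 b) = -(Aᵀ * diagonal b) := by
  ext i j
  simp only [diagonal_mul, mul_diagonal, Matrix.sub_apply, vecMulVec_apply, Matrix.neg_apply,
    transpose_apply, Pi.one_apply, one_mul]
  linear_combination hsymp i j

theorem IsSymplecticRK.blockDet_one_sub_diagonal_mul_map (hsymp : IsSymplecticRK A b)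
    (hb : ∀ i, b i ≠ 0) (G : Fin s → Matrix m m ℝ) :
    blockDet (1 - diagonal G * (A - vecMulVec 1 b).map (algebraMap ℝ (Matrix m m ℝ)))
      = blockDet (1 + diagonal G * Aᵀ.map (algebraMap ℝ (Matrix m m ℝ))) := by
  set φ := (algebraMap ℝ (Matrix m m ℝ)).mapMatrix (m := Fin s)
  have hcomm : φ (diagonal b) * diagonal G = diagonal G * φ (diagonal b) := by
    rw [RingHom.mapMatrix_apply, diagonal_map (map_zero _), diagonal_mul_diagonal,
      diagonal_mul_diagonal]
    simp only [Algebra.commutes]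
  refine blockDet_eq_of_mul_eq_mul (blockDet_map_diagonal_ne_zero hb) ?_
  change φ (diagonal b) * (1 - diagonal G * φ (A - vecMulVec 1 b))
    = (1 + diagonal G * φ Aᵀ) * φ (diagonal b)
  rw [mul_sub, mul_one, ← Matrix.mul_assoc, hcomm, Matrix.mul_assoc, ← map_mul,
    hsymp.diagonal_mul_sub_vecMulVec, map_neg, map_mul, add_mul, one_mul, mul_neg,
    Matrix.mul_assoc, sub_neg_eq_add]

theorem det_one_add_sum_eq_one_of_isSymplecticRK (hsymp : IsSymplecticRK A b)
    (hb : ∀ i, b i ≠ 0) {J : Matrix m m ℝ} (hJ : IsUnit J) {G U : Fin s → Matrix m m ℝ}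
    (hG : ∀ i, (G i)ᵀ * J = -(J * G i)) (hU : ∀ i, U i = G i + ∑ j, A i j • (G i * U j))
    (hinv : blockDet (1 - A.map (algebraMap ℝ (Matrix m m ℝ)) * diagonal G) ≠ 0) :
    (1 + ∑ i, b i • U i).det = 1 := by
  have key := congrArg blockDet (one_sub_diagonal_mul_map_mul_one_add hU b)
  rw [map_mul, hsymp.blockDet_one_sub_diagonal_mul_map hb,
    blockDet_one_add_diagonal_mul_map_transpose hJ hG, blockDet_one_sub_mul_comm] at key
  rw [det_one_add_sum_smul_eq_blockDet]
  exact (mul_eq_left₀ hinv).1 key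

end SymplecticRK

section ExponentialIntegrator

variable {s : ℕ} {m : Type*} [Fintype m] [DecidableEq m]

theorem blockDet_one_sub_map_mul_diagonal_conj (K : Matrix m m ℝ) (c : Fin s → ℝ) (h : ℝ)
    (A : Matrix (Fin s) (Fin s) ℝ) (G : Fin s → Matrix m m ℝ) :
    blockDet (1 - A.map (algebraMap ℝ (Matrix m m ℝ)) * diagonal fun j =>
        h • (NormedSpace.exp ((-(c j * h)) • K) * G j * NormedSpace.exp ((c j * h) • K)))
      = blockDet (1 - h •
        (of (fun i j => A i j • NormedSpace.exp (((c i - c j) * h) • K)) * diagonal G)) := by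
  let E (t : ℝ) : Matrix m m ℝ := NormedSpace.exp (t • K)
  have hsplit : ∀ a t, E ((a - t) * h) = E (a * h) * E (-(t * h)) := fun a t => by
    rw [← exp_smul_add]; congr 2; ring
  have hP : blockDet (diagonal fun i => E (c i * h)) ≠ 0 := by
    rw [blockDet_diagonal]
    exact Finset.prod_ne_zero_iff.2 fun i _ =>
      ((isUnit_iff_isUnit_det _).1 (isUnit_exp ((c i * h) • K))).ne_zero
  refine blockDet_eq_of_mul_eq_mul hP ?_
  ext1 i j
  simp only [diagonal_mul, mul_diagonal, Matrix.sub_apply, Matrix.smul_apply, map_apply, of_apply,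
    ← Algebra.smul_def]
  rw [mul_sub, sub_mul]
  congr 1
  · rcases eq_or_ne i j with rfl | hij
    · simp
    · simp [one_apply_ne hij]
  · simp only [E, hsplit, Matrix.mul_smul, Matrix.smul_mul, smul_smul, Matrix.mul_assoc, mul_comm h]

theorem det_expIntegrator_jacobian_eq_one {J K : Matrix m m ℝ} (hJ : IsUnit J)
    (hK : Kᵀ * J = -(J * K)) {A : Matrix (Fin s) (Fin s) ℝ} {b : Fin s → ℝ}
    (hsymp : IsSymplecticRK A b) (hb : ∀ i, b i ≠ 0) (c : Fin s → ℝ) (h : ℝ)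
    {G D : Fin s → Matrix m m ℝ} (hG : ∀ i, (G i)ᵀ * J = -(J * G i))
    (hD : ∀ i, D i = NormedSpace.exp ((c i * h) • K) +
      h • ∑ j, (A i j • NormedSpace.exp (((c i - c j) * h) • K)) * (G j * D j))
    (hinv : blockDet (1 - h •
      (of (fun i j => A i j • NormedSpace.exp (((c i - c j) * h) • K)) * diagonal G)) ≠ 0) :
    (NormedSpace.exp (h • K) +
      h • ∑ i, (b i • NormedSpace.exp (((1 - c i) * h) • K)) * (G i * D i)).det = 1 := by
  let E (t : ℝ) : Matrix m m ℝ := NormedSpace.exp (t • K)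
  have hsplit : ∀ a t, E ((a - t) * h) = E (a * h) * E (-(t * h)) := fun a t => by
    rw [← exp_smul_add]; congr 2; ring
  have hD' : ∀ i, D i = E (c i * h) + h • ∑ j, (A i j • E ((c i - c j) * h)) * (G j * D j) := hD
  set H : Fin s → Matrix m m ℝ := fun i => h • (E (-(c i * h)) * G i * E (c i * h))
  set U : Fin s → Matrix m m ℝ := fun i => h • (E (-(c i * h)) * (G i * D i))
  have hH : ∀ i, (H i)ᵀ * J = -(J * H i) := fun i => by
    rw [transpose_smul, Matrix.smul_mul, Matrix.mul_smul, transpose_conj_mul_eq_neg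
      (exp_smul_transpose_mul_mul hJ hK _) (exp_neg_smul_mul_exp_smul K _) (hG i), smul_neg]
  have hU : ∀ i, U i = H i + ∑ j, A i j • (H i * U j) := fun i => by
    simp only [U, H]
    rw [hD' i, mul_add, mul_add, smul_add, Matrix.mul_assoc (E _) (G i)]
    congr 1
    simp only [Matrix.mul_sum, Finset.smul_sum]
    refine Finset.sum_congr rfl fun j _ => ?_
    simp only [Matrix.mul_smul, Matrix.smul_mul, smul_smul, hsplit, Matrix.mul_assoc]
    congr 1
    ring
  have hupd : E h + h • ∑ i, (b i • E ((1 - c i) * h)) * (G i * D i)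
      = E h * (1 + ∑ i, b i • U i) := by
    rw [mul_add, mul_one, Matrix.mul_sum, Finset.smul_sum]
    congr 1
    refine Finset.sum_congr rfl fun i _ => ?_
    simp only [U, Matrix.mul_smul, Matrix.smul_mul, smul_smul, hsplit, Matrix.mul_assoc, one_mul,
      mul_comm h]
  have hinv' : blockDet (1 - A.map (algebraMap ℝ (Matrix m m ℝ)) * diagonal H) ≠ 0 :=
    (blockDet_one_sub_map_mul_diagonal_conj K c h A G).trans_ne hinv
  rw [hupd, det_mul, det_exp_smul_eq_one hJ hK,
    det_one_add_sum_eq_one_of_isSymplecticRK hsymp hb hJ hH hU hinv', one_mul]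

end ExponentialIntegrator

/-- **Section 5.1.** All special symplectic exponential integrators preserve volume
for the system `y' = J⁻¹·M·y + J⁻¹·∇V(y)` with `J` invertible skew-symmetric and
`M` symmetric. -/
theorem stmt_18 (n s : ℕ) (h : ℝ) (c : Fin s → ℝ)
    (J M : Matrix (Fin n) (Fin n) ℝ) (hJ : IsUnit J) (hJskew : Jᵀ = -J)
    (hM : Mᵀ = M)
    (V : (Fin n → ℝ) → ℝ) (hV : ContDiff ℝ 2 V)
    (K : Matrix (Fin n) (Fin n) ℝ) (hK : K = J⁻¹ * M)
    (g : (Fin n → ℝ) → (Fin n → ℝ)) (hg : ∀ y, g y = J⁻¹.mulVec (grad V y))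
    (A : Matrix (Fin s) (Fin s) ℝ) (b : Fin s → ℝ)
    (hsymp : IsSymplecticRK A b) (hb : ∀ i, b i ≠ 0)
    (k : Fin s → (Fin n → ℝ) → (Fin n → ℝ))
    (hk : ∀ i, Differentiable ℝ (k i))
    (hkdef : ∀ i y, k i y =
      (NormedSpace.exp ((c i * h) • K)).mulVec y +
        h • ∑ j, (A i j • NormedSpace.exp (((c i - c j) * h) • K)).mulVec (g (k j y)))
    (φ : (Fin n → ℝ) → (Fin n → ℝ))
    (hφ : ∀ y, φ y =
      (NormedSpace.exp (h • K)).mulVec y +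
        h • ∑ i, (b i • NormedSpace.exp (((1 - c i) * h) • K)).mulVec (g (k i y)))
    (F : (Fin n → ℝ) → Matrix (Fin s × Fin n) (Fin s × Fin n) ℝ)
    (hF : ∀ y p q, F y p q = if p.1 = q.1 then jac g (k p.1 y) p.2 q.2 else 0)
    (Ablk : Matrix (Fin s × Fin n) (Fin s × Fin n) ℝ)
    (hAblk : ∀ p q, Ablk p q =
      A p.1 q.1 * NormedSpace.exp (((c p.1 - c q.1) * h) • K) p.2 q.2) :
    ∀ y : Fin n → ℝ,
      IsUnit ((1 : Matrix (Fin s × Fin n) (Fin s × Fin n) ℝ) - h • (Ablk * F y)) →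
        (jac φ y).det = 1 := by
  intro y hinv
  have hg' : g = fun z => J⁻¹ *ᵥ grad V z := funext hg
  have hgd : Differentiable ℝ g := hg' ▸ fun z =>
    (hasFDerivAt_mulVec J⁻¹ _).differentiableAt.comp z (differentiable_grad hV z)
  have hGham : ∀ z, (jac g z)ᵀ * J = -(J * jac g z) := fun z => by
    rw [hg', jac_mulVec_comp _ (differentiable_grad hV z)]
    exact transpose_inv_mul_mul_eq_neg hJ hJskew (jac_grad_transpose hV z)
  rw [funext hφ, jac_mulVec_add_smul_sum _ _ _ (fun _ => hgd _) (fun i => (hk i).differentiableAt)]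
  refine det_expIntegrator_jacobian_eq_one hJ (hK ▸ transpose_inv_mul_mul_eq_neg hJ hJskew hM)
    hsymp hb c h (fun i => hGham _) (fun i => ?_) ?_
  · rw [funext (hkdef i),
      jac_mulVec_add_smul_sum _ _ _ (fun _ => hgd _) (fun j => (hk j).differentiableAt)]
  · have hAblk' : Ablk = compAlgEquiv (Fin s) (Fin n) ℝ ℝ
        (of fun i j => A i j • NormedSpace.exp (((c i - c j) * h) • K)) := by
      ext p q
      simp [hAblk]
    have hF' : F y = compAlgEquiv (Fin s) (Fin n) ℝ ℝ (diagonal fun i => jac g (k i y)) := by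
      ext p q
      rcases eq_or_ne p.1 q.1 with hpq | hpq <;> simp [hF, hpq]
    rw [blockDet_apply, map_sub, map_one, map_smul, map_mul, ← hAblk', ← hF']
    exact ((isUnit_iff_isUnit_det _).1 hinv).ne_zero
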